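/- If (div V)_i ≤ 0 for all i and τ ≥ 0, then every eigenvalue μ of the matrix C_V = I - τ D_V satisfies Re(μ) ≤ 1. -/
import Mathlib

open Matrix BigOperators

noncomputable def divV {κ : ℕ} (V : Matrix (Fin κ) (Fin κ) ℝ) (i : Fin κ) : ℝ :=
  ∑ j, (V j i - V i j)

noncomputable def DV {κ : ℕ} (V : Matrix (Fin κ) (Fin κ) ℝ) : Matrix (Fin κ) (Fin κ) ℝ :=
  fun i j => if i = j then -(divV V i) else V j i - V i j

noncomputable def RV {κ : ℕ} (V : Matrix (Fin κ) (Fin κ) ℝ) : Matrix (Fin κ) (Fin κ) ℝ :=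
  Vᵀ - V

noncomputable def TV {κ : ℕ} (V : Matrix (Fin κ) (Fin κ) ℝ) : Matrix (Fin κ) (Fin κ) ℝ :=
  Matrix.diagonal (divV V)

theorem stmt16 {κ : ℕ} (V : Matrix (Fin κ) (Fin κ) ℝ) (τ : ℝ)
    (hdiv : ∀ i, divV V i ≤ 0) (hτ : 0 ≤ τ) :
    ∀ μ : ℂ, μ ∈ spectrum ℂ (((1 : Matrix (Fin κ) (Fin κ) ℝ) - τ • DV V).map (algebraMap ℝ ℂ)) →
      μ.re ≤ 1 := by
  intro μ hμ
  set M := ((1 : Matrix (Fin κ) (Fin κ) ℝ) - τ • DV V).map (algebraMap ℝ ℂ) with hM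
  rw [← AlgEquiv.spectrum_eq (Matrix.toLinAlgEquiv' : Matrix (Fin κ) (Fin κ) ℂ ≃ₐ[ℂ] _),
    ← Module.End.hasEigenvalue_iff_mem_spectrum] at hμ
  obtain ⟨v, hve, hv0⟩ := hμ.exists_hasEigenvector
  rw [Module.End.mem_eigenspace_iff] at hve
  have hMv : M.mulVec v = μ • v := by
    simpa [Matrix.toLinAlgEquiv'_apply] using hve
  classical
  set f : Fin κ → Fin κ → ℝ := fun i j => ((starRingEnd ℂ) (v i) * v j).re with hf
  have hfsymm : ∀ i j, f i j = f j i := by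
    intro i j
    have : (starRingEnd ℂ) ((starRingEnd ℂ) (v i) * v j) = (starRingEnd ℂ) (v j) * v i := by
      simp [mul_comm]
    calc f i j = ((starRingEnd ℂ) ((starRingEnd ℂ) (v i) * v j)).re := (Complex.conj_re _).symm
    _ = f j i := by rw [this]
  have hfd : ∀ i, f i i = Complex.normSq (v i) := by
    intro i
    simp [hf, mul_comm, Complex.mul_conj, Complex.normSq_apply]
  set N : ℝ := ∑ i, Complex.normSq (v i) with hN
  have hNpos : 0 < N := by
    obtain ⟨i, hi⟩ : ∃ i, v i ≠ 0 := by
      by_contra h; push_neg at h; exact hv0 (funext h)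
    exact Finset.sum_pos' (fun j _ => Complex.normSq_nonneg _)
      ⟨i, Finset.mem_univ i, Complex.normSq_pos.2 hi⟩
  have hS1 : (∑ i, (starRingEnd ℂ) (v i) * (M.mulVec v i)).re = μ.re * N := by
    have : (∑ i, (starRingEnd ℂ) (v i) * (M.mulVec v i)) = μ * (N : ℂ) := by
      rw [hMv]
      have : ∀ i, (starRingEnd ℂ) (v i) * ((μ • v) i) = μ * ↑(Complex.normSq (v i)) := by
        intro i
        rw [Pi.smul_apply, smul_eq_mul,
          show (starRingEnd ℂ) (v i) * (μ * v i) = μ * (v i * (starRingEnd ℂ) (v i)) by ring,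
          Complex.mul_conj]
      rw [Finset.sum_congr rfl (fun i _ => this i), ← Finset.mul_sum]
      push_cast [hN]
      ring
    rw [this]
    simp [Complex.mul_re]
  have hS2 : (∑ i, (starRingEnd ℂ) (v i) * (M.mulVec v i)).re
      = N - τ * ∑ i, ∑ j, DV V i j * f i j := by
    have hterm : ∀ i, (starRingEnd ℂ) (v i) * (M.mulVec v i)
        = ∑ j, (((if i = j then (1:ℝ) else 0) - τ * DV V i j : ℝ) : ℂ)
            * ((starRingEnd ℂ) (v i) * v j) := by
      intro i
      rw [Matrix.mulVec, dotProduct, Finset.mul_sum]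
      refine Finset.sum_congr rfl fun j _ => ?_
      have : M i j = (((if i = j then (1:ℝ) else 0) - τ * DV V i j : ℝ) : ℂ) := by
        simp [hM, Matrix.map_apply, Matrix.sub_apply, Matrix.smul_apply, Matrix.one_apply,
          smul_eq_mul]
      rw [this]; ring
    rw [Finset.sum_congr rfl (fun i _ => hterm i)]
    rw [Complex.re_sum]
    have : ∀ i, (∑ j, (((if i = j then (1:ℝ) else 0) - τ * DV V i j : ℝ) : ℂ)
        * ((starRingEnd ℂ) (v i) * v j)).re
        = Complex.normSq (v i) - τ * ∑ j, DV V i j * f i j := by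
      intro i
      rw [Complex.re_sum]
      have h2 : ∀ j, ((((if i = j then (1:ℝ) else 0) - τ * DV V i j : ℝ) : ℂ)
          * ((starRingEnd ℂ) (v i) * v j)).re
          = (if i = j then (1:ℝ) else 0) * f i j - τ * (DV V i j * f i j) := by
        intro j
        simp only [hf, Complex.re_ofReal_mul]
        ring
      rw [Finset.sum_congr rfl (fun j _ => h2 j), Finset.sum_sub_distrib,
        ← Finset.mul_sum]
      congr 1
      have h3 : ∀ j, (if i = j then (1:ℝ) else 0) * f i j = if i = j then f i j else 0 := by
        intro j; split <;> simp
      rw [Finset.sum_congr rfl (fun j _ => h3 j), Finset.sum_ite_eq Finset.univ i fun j => f i j,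
        if_pos (Finset.mem_univ i), hfd]
    rw [Finset.sum_congr rfl (fun i _ => this i), Finset.sum_sub_distrib, ← hN,
      Finset.mul_sum]
  have hDsplit : ∀ i j, DV V i j = (V j i - V i j) - (if i = j then divV V i else 0) := by
    intro i j
    by_cases h : i = j
    · subst h; simp [DV]
    · simp [DV, h]
  have hanti : ∑ i, ∑ j, (V j i - V i j) * f i j = 0 := by
    have hneg : (∑ i, ∑ j, (V j i - V i j) * f i j)
        = - ∑ i, ∑ j, (V j i - V i j) * f i j := by
      calc (∑ i, ∑ j, (V j i - V i j) * f i j)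
          = ∑ j, ∑ i, (V j i - V i j) * f i j := Finset.sum_comm
        _ = ∑ i, ∑ j, (V i j - V j i) * f j i := rfl
        _ = ∑ i, ∑ j, -((V j i - V i j) * f i j) := by
            refine Finset.sum_congr rfl fun i _ => Finset.sum_congr rfl fun j _ => ?_
            rw [hfsymm i j]; ring
        _ = - ∑ i, ∑ j, (V j i - V i j) * f i j := by simp
    linarith
  have hdiag : ∑ i, ∑ j, (if i = j then divV V i else 0) * f i j
      = ∑ i, divV V i * Complex.normSq (v i) := by
    refine Finset.sum_congr rfl fun i _ => ?_
    rw [← hfd i]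
    calc ∑ j, (if i = j then divV V i else 0) * f i j
        = ∑ j, (if i = j then divV V i * f i j else 0) := by
          refine Finset.sum_congr rfl fun j _ => ?_
          by_cases h : i = j <;> simp [h]
      _ = divV V i * f i i := by
          rw [Finset.sum_ite_eq Finset.univ i fun j => divV V i * f i j,
            if_pos (Finset.mem_univ i)]
  have hDf : ∑ i, ∑ j, DV V i j * f i j = - ∑ i, divV V i * Complex.normSq (v i) := by
    have : ∀ i j, DV V i j * f i j
        = (V j i - V i j) * f i j - (if i = j then divV V i else 0) * f i j := by
      intro i j; rw [hDsplit i j]; ring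
    rw [Finset.sum_congr rfl (fun i _ => Finset.sum_congr rfl (fun j _ => this i j))]
    simp_rw [Finset.sum_sub_distrib]
    rw [hanti, hdiag]
    ring
  have hDfnn : 0 ≤ ∑ i, ∑ j, DV V i j * f i j := by
    rw [hDf]
    have : ∑ i, divV V i * Complex.normSq (v i) ≤ 0 :=
      Finset.sum_nonpos fun i _ =>
        mul_nonpos_of_nonpos_of_nonneg (hdiv i) (Complex.normSq_nonneg _)
    linarith
  have key : μ.re * N ≤ N := by
    rw [← hS1, hS2]
    nlinarith [mul_nonneg hτ hDfnn]
  nlinarith
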